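/- Detection by generalized (parity) traps: Let n ≥ 1, let Q be a subset of Fin n, let Z_Q = ∏_{q ∈ Q} Z_q, let G be a unitary 2^n × 2^n complex matrix, and let ψ ∈ ℂ^(2^n) satisfy (Gᴴ · Z_Q · G) ψ = ψ. Let E be a 2^n × 2^n matrix anticommuting with Z_Q (i.e. Z_Q · E = − E · Z_Q). Then measuring all qubits of the deviated state E · G ψ yields with certainty an outcome string x with odd parity on Q: Π_Q^even (E · G ψ) = 0, where Π_Q^even is the diagonal projector onto basis vectors e_x with ∑_{q ∈ Q} x q even; i.e. the generalized trap is deterministically triggered. -/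
import Mathlib


open Matrix Finset

/-- The four single-qubit Pauli matrices: identity, X, Y, Z. -/
noncomputable def pauli : Fin 4 → Matrix (Fin 2) (Fin 2) ℂ
  | 0 => 1
  | 1 => !![0, 1; 1, 0]
  | 2 => !![0, -Complex.I; Complex.I, 0]
  | 3 => !![1, 0; 0, -1]

/-- The `n`-qubit Pauli string associated to `f : Fin n → Fin 4`. -/
noncomputable def PauliString (n : ℕ) (f : Fin n → Fin 4) :
    Matrix (Fin n → Fin 2) (Fin n → Fin 2) ℂ :=
  fun x y => ∏ i, pauli (f i) (x i) (y i)
/-- The `n`-qubit Pauli string with a `Z` exactly on the positions of `Q`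
(equivalently, the product `∏_{q ∈ Q} Z_q`). -/
noncomputable def ZtrapSet (n : ℕ) (Q : Finset (Fin n)) :
    Matrix (Fin n → Fin 2) (Fin n → Fin 2) ℂ :=
  PauliString n (fun i => if i ∈ Q then 3 else 0)

/-- The projector onto computational basis vectors `e_x` with `∑_{q ∈ Q} x q` even. -/
noncomputable def projEven (n : ℕ) (Q : Finset (Fin n)) :
    Matrix (Fin n → Fin 2) (Fin n → Fin 2) ℂ :=
  Matrix.diagonal (fun x => if Even (∑ q ∈ Q, (x q : ℕ)) then 1 else 0)

lemma pauli3_ne (a b : Fin 2) (h : a ≠ b) : pauli 3 a b = 0 := by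
  fin_cases a <;> fin_cases b <;> simp_all [pauli]

lemma pauli_diag_Q (a : Fin 2) : pauli 3 a a = (-1 : ℂ) ^ (a : ℕ) := by
  fin_cases a <;> simp [pauli]

lemma pauli_eq_if (f : Fin 4) (a b : Fin 2) :
    pauli (if False then f else 0) a b = (1 : Matrix (Fin 2) (Fin 2) ℂ) a b := by simp [pauli]

lemma ZtrapSet_eq_diagonal (n : ℕ) (Q : Finset (Fin n)) :
    ZtrapSet n Q = Matrix.diagonal (fun x => (-1 : ℂ) ^ (∑ q ∈ Q, (x q : ℕ))) := by
  ext x y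
  simp only [ZtrapSet, PauliString, Matrix.diagonal_apply]
  by_cases hxy : x = y
  · subst hxy
    rw [if_pos rfl, ← Finset.prod_pow_eq_pow_sum]
    have h1 : ∀ i : Fin n, pauli (if i ∈ Q then 3 else 0) (x i) (x i)
        = if i ∈ Q then (-1 : ℂ) ^ (x i : ℕ) else 1 := by
      intro i
      by_cases hi : i ∈ Q
      · rw [if_pos hi, if_pos hi, pauli_diag_Q]
      · rw [if_neg hi, if_neg hi]; simp [pauli]
    simp only [h1]
    rw [Finset.prod_ite_mem, Finset.univ_inter]
  · rw [if_neg hxy]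
    obtain ⟨i, hi⟩ : ∃ i, x i ≠ y i := by
      by_contra h; push_neg at h; exact hxy (funext h)
    apply Finset.prod_eq_zero (Finset.mem_univ i)
    by_cases hiQ : i ∈ Q
    · rw [if_pos hiQ]
      exact pauli3_ne _ _ hi
    · rw [if_neg hiQ]
      simp only [pauli, Matrix.one_apply, if_neg hi]

lemma two_smul_projEven (n : ℕ) (Q : Finset (Fin n)) :
    (2 : ℂ) • projEven n Q = 1 + ZtrapSet n Q := by
  rw [ZtrapSet_eq_diagonal]
  ext x y
  by_cases hxy : x = y
  · subst hxy
    simp only [projEven, Matrix.smul_apply, Matrix.diagonal_apply_eq, Matrix.add_apply,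
      Matrix.one_apply_eq]
    by_cases h : Even (∑ q ∈ Q, (x q : ℕ))
    · rw [if_pos h, Even.neg_one_pow h, smul_eq_mul, mul_one]; try norm_num
    · rw [if_neg h, Odd.neg_one_pow (Nat.not_even_iff_odd.mp h), smul_zero]; try norm_num
  · simp [projEven, Matrix.diagonal_apply_ne _ hxy, Matrix.one_apply_ne hxy]

/-- **Detection by generalized (parity) traps**: if `G` is unitary, `ψ` is a `+1`
eigenvector of `G† Z_Q G`, and the deviation `E` anticommutes with `Z_Q`, then
measuring all qubits of the deviated state `E G ψ` yields with certainty an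
outcome string with odd parity on `Q`: the even-parity component vanishes. -/
theorem generalized_trap_detects_anticommuting (n : ℕ) (hn : 1 ≤ n)
    (Q : Finset (Fin n))
    (G : Matrix (Fin n → Fin 2) (Fin n → Fin 2) ℂ)
    (hG : G ∈ Matrix.unitaryGroup (Fin n → Fin 2) ℂ)
    (ψ : (Fin n → Fin 2) → ℂ)
    (hψ : (Gᴴ * ZtrapSet n Q * G).mulVec ψ = ψ)
    (E : Matrix (Fin n → Fin 2) (Fin n → Fin 2) ℂ)
    (hE : ZtrapSet n Q * E = -(E * ZtrapSet n Q)) :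
    (projEven n Q).mulVec (E.mulVec (G.mulVec ψ)) = 0 := by
  have hGG : G * Gᴴ = 1 := hG.2
  have hZG : (ZtrapSet n Q).mulVec (G.mulVec ψ) = G.mulVec ψ := by
    conv_rhs => rw [← hψ]
    rw [Matrix.mulVec_mulVec, Matrix.mulVec_mulVec,
      show G * (Gᴴ * ZtrapSet n Q * G) = ZtrapSet n Q * G by
        rw [← Matrix.mul_assoc, ← Matrix.mul_assoc, hGG, Matrix.one_mul]]
  have hZv : (ZtrapSet n Q).mulVec (E.mulVec (G.mulVec ψ)) = -(E.mulVec (G.mulVec ψ)) := by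
    rw [Matrix.mulVec_mulVec, hE, Matrix.neg_mulVec, ← Matrix.mulVec_mulVec, hZG]
  have key : (2 : ℂ) • (projEven n Q).mulVec (E.mulVec (G.mulVec ψ)) = 0 := by
    rw [← Matrix.smul_mulVec, two_smul_projEven, Matrix.add_mulVec,
      Matrix.one_mulVec, hZv, add_neg_cancel]
  have h2 := congrArg (fun v => (2 : ℂ)⁻¹ • v) key
  simpa [smul_smul] using h2
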